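/- arXiv:1708.03938 — 4 statements merged into one kernel-verified Lean document; each statement's English description precedes it below -/
import Mathlib

section
/- Let ξ be a random variable with values in [1,∞). Then there exists a nondecreasing function φ: [1,∞) → [0,∞), slowly varying at ∞, such that lim_{x→∞} φ(x) = ∞ and E φ(ξ) < ∞. -/
/-!
Pick thresholds `b n` with `P (ξ ≥ b n) ≤ 2⁻ⁿ` and a sequence `a n ≥ b n` growing so fast that
`a (n + 1) ≥ (n + 1) a n`. Take for `φ` the counting function `N x = #{n ≥ 1 | a n ≤ x}`.
Then `E N(ξ) = ∑ P (ξ ≥ a n) ≤ 1`, and for fixed `c` the interval `[x, c x]` contains at most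
one term of `a` once `x` is large, so `N (c x) - N x` stays bounded while `N → ∞`.
-/

open MeasureTheory Filter Topology Asymptotics
open scoped ENNReal

noncomputable section

def SlowlyVarying (φ : ℝ → ℝ) : Prop :=
  ∀ c : ℝ, 0 < c → Tendsto (fun x => φ (c * x) / φ x) atTop (𝓝 1)

theorem SlowlyVarying.of_isBigO_sub {φ : ℝ → ℝ} (hφ : Tendsto φ atTop atTop)
    (h : ∀ c : ℝ, 0 < c → (fun x => φ (c * x) - φ x) =O[atTop] fun _ => (1 : ℝ)) :
    SlowlyVarying φ := by
  intro c hc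
  have hsmall : (fun x => φ (c * x) - φ x) =o[atTop] φ :=
    (h c hc).trans_isLittleO ((isLittleO_one_left_iff ℝ).2 (tendsto_norm_atTop_atTop.comp hφ))
  have hlim := hsmall.tendsto_div_nhds_zero.const_add 1
  rw [add_zero] at hlim
  refine hlim.congr' ?_
  filter_upwards [hφ.eventually_ne_atTop 0] with x hx
  field_simp
  ring

theorem isBigO_comp_mul_sub_of_monotone {φ : ℝ → ℝ} (hmono : Monotone φ)
    (h : ∀ c : ℝ, 1 ≤ c → ∃ C, ∀ᶠ x in atTop, φ (c * x) ≤ φ x + C) {c : ℝ} (hc : 0 < c) :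
    (fun x => φ (c * x) - φ x) =O[atTop] fun _ => (1 : ℝ) := by
  rcases le_total 1 c with hc1 | hc1
  · obtain ⟨C, hC⟩ := h c hc1
    refine IsBigO.of_bound C ?_
    filter_upwards [hC, eventually_ge_atTop 0] with x hle hx
    have hge : φ x ≤ φ (c * x) := hmono (le_mul_of_one_le_left hx hc1)
    rw [norm_one, mul_one, Real.norm_of_nonneg (by linarith)]
    linarith
  · obtain ⟨C, hC⟩ := h c⁻¹ (one_le_inv₀ hc |>.2 hc1)
    refine IsBigO.of_bound C ?_
    filter_upwards [(tendsto_id.const_mul_atTop hc).eventually hC, eventually_ge_atTop 0]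
      with x hle hx
    rw [id, inv_mul_cancel_left₀ hc.ne'] at hle
    have hge : φ (c * x) ≤ φ x := hmono (mul_le_of_le_one_left hx hc1)
    rw [norm_one, mul_one, Real.norm_of_nonpos (by linarith)]
    linarith

theorem SlowlyVarying.of_monotone {φ : ℝ → ℝ} (hmono : Monotone φ) (hφ : Tendsto φ atTop atTop)
    (h : ∀ c : ℝ, 1 ≤ c → ∃ C, ∀ᶠ x in atTop, φ (c * x) ≤ φ x + C) :
    SlowlyVarying φ :=
  .of_isBigO_sub hφ fun _ hc => isBigO_comp_mul_sub_of_monotone hmono h hc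

theorem tendsto_measure_setOf_le_atTop {Ω : Type*} [MeasurableSpace Ω] (μ : Measure Ω)
    [IsFiniteMeasure μ] {f : Ω → ℝ} (hf : Measurable f) :
    Tendsto (fun t => μ {ω | t ≤ f ω}) atTop (𝓝 0) := by
  have hempty : ⋂ t : ℝ, {ω | t ≤ f ω} = ∅ :=
    Set.eq_empty_of_forall_notMem fun ω hω =>
      (lt_add_one (f ω)).not_ge (Set.mem_iInter.1 hω (f ω + 1))
  have := tendsto_measure_iInter_atTop (μ := μ)
    (fun _ => (measurableSet_le measurable_const hf).nullMeasurableSet)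
    (fun _ _ hst => Set.ofPred_subset_ofPred.2 fun _ => hst.trans) ⟨0, measure_ne_top μ _⟩
  rwa [hempty, measure_empty] at this

/-- The cap `⌊x⌋₊` only makes `Nat.findGreatest` applicable: if `n ≤ a n` for all `n` and `a` is
monotone, this is the number of `n ≥ 1` with `a n ≤ x`. -/
def lastIndexLE (a : ℕ → ℝ) (x : ℝ) : ℕ :=
  Nat.findGreatest (fun n => a n ≤ x) ⌊x⌋₊

section lastIndexLE

variable {a : ℕ → ℝ} {n : ℕ} {x : ℝ}

theorem monotone_lastIndexLE (a : ℕ → ℝ) : Monotone (lastIndexLE a) := fun _ _ hxy =>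
  Nat.findGreatest_mono (fun _ h => h.trans hxy) (Nat.floor_mono hxy)

theorem le_lastIndexLE (hn : (n : ℝ) ≤ a n) (h : a n ≤ x) : n ≤ lastIndexLE a x :=
  Nat.le_findGreatest (Nat.le_floor (hn.trans h)) h

theorem apply_le_of_le_lastIndexLE (ha : Monotone a) (h : n ≤ lastIndexLE a x) (hn : n ≠ 0) :
    a n ≤ x :=
  (ha h).trans (Nat.findGreatest_of_ne_zero (m := lastIndexLE a x) rfl (by omega))

theorem tendsto_lastIndexLE (hid : ∀ n : ℕ, (n : ℝ) ≤ a n) :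
    Tendsto (lastIndexLE a) atTop atTop :=
  tendsto_atTop.2 fun n => (eventually_ge_atTop (a n)).mono fun _ hx => le_lastIndexLE (hid n) hx

theorem monotone_of_forall_mul_le_succ (hnonneg : ∀ n, 0 ≤ a n)
    (hgrowth : ∀ n : ℕ, ((n : ℝ) + 1) * a n ≤ a (n + 1)) : Monotone a :=
  monotone_nat_of_le_succ fun n =>
    (le_mul_of_one_le_left (hnonneg n) (by simp)).trans (hgrowth n)

/-- With `m = lastIndexLE a x ≥ c` we get `c x < c a (m + 1) ≤ (m + 2) a (m + 1) ≤ a (m + 2)`. -/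
theorem lastIndexLE_mul_le_succ (hid : ∀ n : ℕ, (n : ℝ) ≤ a n)
    (hgrowth : ∀ n : ℕ, ((n : ℝ) + 1) * a n ≤ a (n + 1)) {c : ℝ} (hc : 0 < c)
    (hx : a ⌈c⌉₊ ≤ x) : lastIndexLE a (c * x) ≤ lastIndexLE a x + 1 := by
  set m := lastIndexLE a x
  have hcm : c ≤ m := (Nat.le_ceil c).trans (by exact_mod_cast le_lastIndexLE (hid _) hx)
  have hxlt : x < a (m + 1) :=
    lt_of_not_ge fun h => by have := le_lastIndexLE (hid _) h; omega
  have hcx : c * x < a (m + 2) :=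
    calc c * x < c * a (m + 1) := mul_lt_mul_of_pos_left hxlt hc
      _ ≤ ((m + 1 : ℕ) + 1) * a (m + 1) := by
          gcongr
          · exact (Nat.cast_nonneg _).trans (hid _)
          · push_cast; linarith
      _ ≤ a (m + 2) := hgrowth (m + 1)
  by_contra! h
  have ha := monotone_of_forall_mul_le_succ (fun n => (Nat.cast_nonneg n).trans (hid n)) hgrowth
  exact hcx.not_ge (apply_le_of_le_lastIndexLE ha h (by omega))

theorem slowlyVarying_lastIndexLE (hid : ∀ n : ℕ, (n : ℝ) ≤ a n)
    (hgrowth : ∀ n : ℕ, ((n : ℝ) + 1) * a n ≤ a (n + 1)) :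
    SlowlyVarying fun x => (lastIndexLE a x : ℝ) :=
  .of_monotone (Nat.mono_cast.comp (monotone_lastIndexLE a))
    (tendsto_natCast_atTop_atTop.comp (tendsto_lastIndexLE hid)) fun c hc =>
      ⟨1, (eventually_ge_atTop (a ⌈c⌉₊)).mono fun x hx => by
        exact_mod_cast lastIndexLE_mul_le_succ hid hgrowth (by positivity) hx⟩

theorem natCast_lastIndexLE_le_tsum (ha : Monotone a) (x : ℝ) :
    (lastIndexLE a x : ℝ≥0∞) ≤ ∑' k : ℕ, (Set.Ici (a (k + 1))).indicator 1 x :=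
  calc (lastIndexLE a x : ℝ≥0∞)
      = ∑ _k ∈ Finset.range (lastIndexLE a x), 1 := by simp
    _ = ∑ k ∈ Finset.range (lastIndexLE a x), (Set.Ici (a (k + 1))).indicator 1 x :=
        Finset.sum_congr rfl fun k hk => (Set.indicator_of_mem (s := Set.Ici (a (k + 1)))
          (apply_le_of_le_lastIndexLE ha (Finset.mem_range.1 hk) k.succ_ne_zero) 1).symm
    _ ≤ ∑' k : ℕ, (Set.Ici (a (k + 1))).indicator 1 x := ENNReal.sum_le_tsum _

theorem lintegral_lastIndexLE_le {Ω : Type*} [MeasurableSpace Ω] (μ : Measure Ω)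
    (ha : Monotone a) {f : Ω → ℝ} (hf : Measurable f) :
    ∫⁻ ω, (lastIndexLE a (f ω) : ℝ≥0∞) ∂μ ≤ ∑' k : ℕ, μ {ω | a (k + 1) ≤ f ω} :=
  calc ∫⁻ ω, (lastIndexLE a (f ω) : ℝ≥0∞) ∂μ
      ≤ ∫⁻ ω, ∑' k : ℕ, (Set.Ici (a (k + 1))).indicator 1 (f ω) ∂μ :=
        lintegral_mono fun ω => natCast_lastIndexLE_le_tsum ha (f ω)
    _ = ∑' k : ℕ, μ {ω | a (k + 1) ≤ f ω} := by
        refine (lintegral_tsum fun k => ?_).trans (tsum_congr fun k => ?_)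
        · exact ((measurable_const.indicator measurableSet_Ici).comp hf).aemeasurable
        · exact lintegral_indicator_one (measurableSet_le measurable_const hf)

end lastIndexLE

def fastMajorant (b : ℕ → ℝ) : ℕ → ℝ
  | 0 => max (b 0) 1
  | n + 1 => max (b (n + 1)) ((n + 1) * fastMajorant b n)

section fastMajorant

variable (b : ℕ → ℝ) (n : ℕ)

theorem le_fastMajorant : b n ≤ fastMajorant b n := by
  cases n <;> exact le_max_left _ _

theorem fastMajorant_growth : ((n : ℝ) + 1) * fastMajorant b n ≤ fastMajorant b (n + 1) :=
  le_max_right _ _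

theorem one_le_fastMajorant : 1 ≤ fastMajorant b n := by
  induction n with
  | zero => exact le_max_right _ _
  | succ n ih =>
    refine le_trans ?_ (fastMajorant_growth b n)
    nlinarith [(Nat.cast_nonneg n : (0 : ℝ) ≤ n)]

theorem natCast_le_fastMajorant : (n : ℝ) ≤ fastMajorant b n := by
  cases n with
  | zero => exact Nat.cast_zero (R := ℝ) ▸ zero_le_one.trans (one_le_fastMajorant b 0)
  | succ n =>
    refine le_trans ?_ (fastMajorant_growth b n)
    push_cast
    nlinarith [one_le_fastMajorant b n, (Nat.cast_nonneg n : (0 : ℝ) ≤ n)]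

end fastMajorant

theorem exists_slowly_varying_with_finite_expectation_general
    {Ω : Type*} [MeasurableSpace Ω] (P : Measure Ω) [IsProbabilityMeasure P]
    (ξ : Ω → ℝ) (hξmeas : Measurable ξ) :
    ∃ φ : ℝ → ℝ,
      MonotoneOn φ (Set.Ici 1) ∧
      (∀ x : ℝ, 1 ≤ x → 0 ≤ φ x) ∧
      (∀ c : ℝ, 0 < c → Tendsto (fun x => φ (c * x) / φ x) atTop (𝓝 1)) ∧
      Tendsto φ atTop atTop ∧
      (∫⁻ ω, ENNReal.ofReal (φ (ξ ω)) ∂P) < ∞ := by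
  have htail (n : ℕ) : ∃ t : ℝ, P {ω | t ≤ ξ ω} ≤ 2⁻¹ ^ n :=
    ((tendsto_measure_setOf_le_atTop P hξmeas).eventually
      (ge_mem_nhds (ENNReal.pow_pos (by simp) n))).exists
  choose b hb using htail
  set a := fastMajorant b
  have hid := natCast_le_fastMajorant b
  have hgrowth := fastMajorant_growth b
  refine ⟨fun x => lastIndexLE a x, (Nat.mono_cast.comp (monotone_lastIndexLE a)).monotoneOn _,
    fun x _ => Nat.cast_nonneg _, slowlyVarying_lastIndexLE hid hgrowth,
    tendsto_natCast_atTop_atTop.comp (tendsto_lastIndexLE hid), ?_⟩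
  calc ∫⁻ ω, ENNReal.ofReal (lastIndexLE a (ξ ω)) ∂P
      = ∫⁻ ω, (lastIndexLE a (ξ ω) : ℝ≥0∞) ∂P := by simp only [ENNReal.ofReal_natCast]
    _ ≤ ∑' k : ℕ, P {ω | a (k + 1) ≤ ξ ω} :=
        lintegral_lastIndexLE_le P (monotone_of_forall_mul_le_succ
          (fun n => zero_le_one.trans (one_le_fastMajorant b n)) hgrowth) hξmeas
    _ ≤ ∑' k : ℕ, 2⁻¹ ^ (k + 1) := ENNReal.tsum_le_tsum fun k =>
        (measure_mono fun ω hω => (le_fastMajorant b _).trans hω).trans (hb _)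
    _ < ∞ := by simp [ENNReal.tsum_geometric_add_one, ENNReal.inv_mul_cancel]

/-- **Lemma 2.2**: for any random variable `ξ` with values in `[1,∞)` there is a
nondecreasing function `φ : [1,∞) → [0,∞)`, slowly varying at `∞`, with
`lim_{x→∞} φ(x) = ∞` and `E φ(ξ) < ∞`. -/
theorem exists_slowly_varying_with_finite_expectation
    {Ω : Type*} [MeasurableSpace Ω] (P : Measure Ω) [IsProbabilityMeasure P]
    (ξ : Ω → ℝ) (hξmeas : Measurable ξ) (hξ : ∀ ω, 1 ≤ ξ ω) :
    ∃ φ : ℝ → ℝ,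
      MonotoneOn φ (Set.Ici 1) ∧
      (∀ x : ℝ, 1 ≤ x → 0 ≤ φ x) ∧
      (∀ c : ℝ, 0 < c → Tendsto (fun x => φ (c * x) / φ x) atTop (𝓝 1)) ∧
      Tendsto φ atTop atTop ∧
      (∫⁻ ω, ENNReal.ofReal (φ (ξ ω)) ∂P) < ∞ :=
  exists_slowly_varying_with_finite_expectation_general P ξ hξmeas
end
end

section
/- Assume m_{-2} := ∫_{[0,1]} x^{-2} Λ(dx) < ∞. Fix ℓ ∈ ℕ and let φ: [1,∞) → (0,∞) be a nondecreasing function, slowly varying at ∞, such that ∫_{(0,1]} y^{-2} φ(1/y) Λ(dy) < ∞. Then the series Σ_{m=ℓ+1}^{∞} p_{m,ℓ} φ(m)/m converges. -/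
open MeasureTheory Filter Topology BoundedContinuousFunction
open scoped ENNReal NNReal

noncomputable section

/-- Collision rate `λ_{m,k} = ∫_{[0,1]} x^{k-2} (1-x)^{m-k} Λ(dx)`. -/
def lamColl (Λ : Measure ℝ) (m k : ℕ) : ℝ :=
  ∫ x in Set.Icc (0:ℝ) 1, x ^ (k - 2) * (1 - x) ^ (m - k) ∂Λ

/-- Total collision rate `λ_m = Σ_{k=2}^m C(m,k) λ_{m,k}`. -/
def lamTot (Λ : Measure ℝ) (m : ℕ) : ℝ :=
  ∑ k ∈ Finset.Icc 2 m, (m.choose k : ℝ) * lamColl Λ m k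

/-- `p_{m,k} = C(m,k+1) λ_{m,k+1} / λ_m`. -/
def pColl (Λ : Measure ℝ) (m k : ℕ) : ℝ :=
  (m.choose (k + 1) : ℝ) * lamColl Λ m (k + 1) / lamTot Λ m

/-- Adding to a spectrum the record of one collision of `j+1` blocks. -/
def addColl (j : ℕ) (x : ℕ → ℝ) : ℕ → ℝ := fun k => (if k = j + 1 then 1 else 0) + x k

/-- `μ n` is the law of the collision spectrum `(X_{n,k})_{k ≥ 2}` of the `Λ`-coalescent
started from `n` blocks, viewed as a (probability) measure on `ℕ → ℝ` whose coordinate `k`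
carries `X_{n,k}`; it is characterised by the distributional recursion obtained by
decomposing at the first collision. -/
def IsCollisionSpectrum (Λ : Measure ℝ) (μ : ℕ → Measure (ℕ → ℝ)) : Prop :=
  (∀ n, IsProbabilityMeasure (μ n)) ∧
  μ 1 = Measure.dirac (fun _ => (0:ℝ)) ∧
  ∀ n, 2 ≤ n → μ n = ∑ j ∈ Finset.Icc 1 (n - 1),
      ENNReal.ofReal (pColl Λ n j) • (μ (n - j)).map (addColl j)

/-- `m_{-2} = ∫_{[0,1]} x^{-2} Λ(dx)`. -/
def mm2 (Λ : Measure ℝ) : ℝ≥0∞ :=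
  ∫⁻ x in Set.Icc (0:ℝ) 1, ENNReal.ofReal (x⁻¹ ^ 2) ∂Λ

/-- The law of `1 - W`, i.e. the probability measure `m_{-2}^{-1} y^{-2} Λ(dy)` on `[0,1]`. -/
def lawY (Λ : Measure ℝ) : Measure ℝ :=
  (mm2 Λ)⁻¹ • (Λ.restrict (Set.Icc 0 1)).withDensity fun y => ENNReal.ofReal (y⁻¹ ^ 2)

/-- The law of `W`: the pushforward of `lawY Λ` under `y ↦ 1 - y`, so that
`P{W ≤ x} = m_{-2}^{-1} ∫_{[1-x,1]} y^{-2} Λ(dy)`. -/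
def lawW (Λ : Measure ℝ) : Measure ℝ := (lawY Λ).map fun y => 1 - y

/-!
On `[0,1]`, `∑_{k=2}^m C(m,k) x^{k-2} (1-x)^{m-k} ≥ ∑_j C(m-2,j) x^j (1-x)^{m-2-j} = 1`, so
`λ_m ≥ Λ[0,1]` and `p_{m,ℓ} ≤ C(m,ℓ+1) λ_{m,ℓ+1} / Λ[0,1]`. The partial sums of the series are
therefore bounded by `Λ[0,1]⁻¹ ∫ ∑_m C(m,ℓ+1) x^{ℓ-1} (1-x)^{m-ℓ-1} φ(m)/m Λ(dx)`.
Slow variation gives `φ(2t) ≤ 2 φ(t)` for large `t`, whence `φ(m) ≤ 2 (φ(1/x) + C) (1 + m x)`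
for `0 < x ≤ 1`. The negative-binomial identities `∑_m C(m,k) x^k (1-x)^{m-k} = 1/x` and
`∑_m C(m,k) x^k (1-x)^{m-k} / m = 1/k` then bound the inner sum by `4 x⁻² (φ(1/x) + C)`, which is
`Λ`-integrable by the two integrability assumptions.
-/

open Finset

lemma one_le_sum_choose_mul_pow_mul_pow {x : ℝ} (h0 : 0 ≤ x) (h1 : x ≤ 1) (n : ℕ) :
    1 ≤ ∑ k ∈ Icc 2 (n + 2), ((n + 2).choose k : ℝ) * (x ^ (k - 2) * (1 - x) ^ (n + 2 - k)) := by
  calc (1 : ℝ) = (x + (1 - x)) ^ n := by simp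
    _ = ∑ j ∈ Ico 0 (n + 1), (n.choose j : ℝ) * (x ^ j * (1 - x) ^ (n - j)) := by
      rw [add_pow, range_eq_Ico]
      exact sum_congr rfl fun j _ => by ring
    _ ≤ ∑ j ∈ Ico 0 (n + 1), ((n + 2).choose (j + 2) : ℝ) *
          (x ^ (j + 2 - 2) * (1 - x) ^ (n + 2 - (j + 2))) := by
      simp only [Nat.add_sub_cancel, Nat.add_sub_add_right]
      have : 0 ≤ 1 - x := by linarith
      gcongr with j
      simp only [Nat.choose_succ_succ']
      omega
    _ = _ := sum_Ico_add' (fun k => ((n + 2).choose k : ℝ) * (x ^ (k - 2) * (1 - x) ^ (n + 2 - k)))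
      0 (n + 1) 2

lemma hasSum_choose_mul_pow_mul_pow {x : ℝ} (h0 : 0 < x) (h1 : x ≤ 1) (k : ℕ) :
    HasSum (fun m => (m.choose k : ℝ) * x ^ k * (1 - x) ^ (m - k)) x⁻¹ := by
  have hgeom := (hasSum_choose_mul_geometric_of_norm_lt_one k (r := 1 - x)
    (by rw [Real.norm_eq_abs, abs_lt]; constructor <;> linarith)).mul_left (x ^ k)
  rw [sub_sub_cancel, ← div_eq_mul_one_div, pow_succ, div_mul_cancel_left₀ (by positivity)] at hgeom
  rw [← hasSum_nat_add_iff' k,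
    sum_eq_zero fun i hi => by simp [Nat.choose_eq_zero_of_lt (mem_range.1 hi)], sub_zero]
  exact hgeom.congr_fun fun n => by rw [Nat.add_sub_cancel]; ring

lemma hasSum_choose_mul_pow_mul_pow_div {x : ℝ} (h0 : 0 < x) (h1 : x ≤ 1) (k : ℕ) :
    HasSum (fun m => (m.choose (k + 1) : ℝ) * x ^ (k + 1) * (1 - x) ^ (m - (k + 1)) / m)
      (k + 1 : ℝ)⁻¹ := by
  have hgeom := (hasSum_choose_mul_geometric_of_norm_lt_one k (r := 1 - x)
    (by rw [Real.norm_eq_abs, abs_lt]; constructor <;> linarith)).mul_left (x ^ (k + 1) / (k + 1))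
  rw [sub_sub_cancel, show x ^ (k + 1) / (k + 1) * (1 / x ^ (k + 1)) = (k + 1 : ℝ)⁻¹ by
    field_simp] at hgeom
  rw [← hasSum_nat_add_iff' (k + 1),
    sum_eq_zero fun i hi => by simp [Nat.choose_eq_zero_of_lt (mem_range.1 hi)], sub_zero]
  refine hgeom.congr_fun fun n => ?_
  have hchoose : ((n + k + 1).choose (k + 1) : ℝ) * (k + 1) = (n + k + 1) * (n + k).choose k := by
    exact_mod_cast (Nat.add_one_mul_choose_eq (n + k) k).symm
  rw [Nat.add_sub_cancel, ← add_assoc]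
  push_cast
  field_simp
  linear_combination (1 - x) ^ n * hchoose

lemma pow_sub_two_le_pow_mul_inv_sq {x : ℝ} (h0 : 0 < x) (h1 : x ≤ 1) (n : ℕ) :
    x ^ (n - 2) ≤ x ^ n * x⁻¹ ^ 2 := by
  rw [inv_pow, ← div_eq_mul_inv, le_div_iff₀ (by positivity), ← pow_add]
  exact pow_le_pow_of_le_one h0.le h1 (by omega)

lemma sum_choose_mul_pow_mul_pow_mul_div_le {x c : ℝ} (h0 : 0 < x) (h1 : x ≤ 1) (hc : 0 ≤ c)
    {a : ℕ → ℝ} (ha : ∀ m : ℕ, 1 ≤ m → a m ≤ c * (1 + m * x)) (k : ℕ) (s : Finset ℕ) :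
    ∑ m ∈ s, (m.choose (k + 1) : ℝ) * (x ^ (k + 1 - 2) * (1 - x) ^ (m - (k + 1))) * (a m / m)
      ≤ 2 * c * x⁻¹ ^ 2 := by
  set b : ℕ → ℝ := fun m => (m.choose (k + 1) : ℝ) * x ^ (k + 1) * (1 - x) ^ (m - (k + 1))
  have h1x : 0 ≤ 1 - x := by linarith
  have hb (m : ℕ) : 0 ≤ b m := by positivity
  have hterm : ∀ m, (m.choose (k + 1) : ℝ) * (x ^ (k + 1 - 2) * (1 - x) ^ (m - (k + 1))) * (a m / m)
      ≤ c * x⁻¹ ^ 2 * (b m / m + x * b m) := by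
    intro m
    rcases Nat.eq_zero_or_pos m with rfl | hm
    · simp only [Nat.cast_zero, div_zero, mul_zero, zero_add]
      exact mul_nonneg (by positivity) (mul_nonneg h0.le (hb 0))
    calc _ ≤ (m.choose (k + 1) : ℝ) * (x ^ (k + 1 - 2) * (1 - x) ^ (m - (k + 1))) *
          (c * (1 + m * x) / m) := by
          gcongr
          exact ha m hm
      _ ≤ (m.choose (k + 1) : ℝ) * (x ^ (k + 1) * x⁻¹ ^ 2 * (1 - x) ^ (m - (k + 1))) *
          (c * (1 + m * x) / m) := by
          gcongr
          exact pow_sub_two_le_pow_mul_inv_sq h0 h1 _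
      _ = c * x⁻¹ ^ 2 * (b m / m + x * b m) := by
          simp only [b]
          field_simp
  calc _ ≤ ∑ m ∈ s, c * x⁻¹ ^ 2 * (b m / m + x * b m) := sum_le_sum fun m _ => hterm m
    _ = c * x⁻¹ ^ 2 * (∑ m ∈ s, b m / m + x * ∑ m ∈ s, b m) := by
        rw [← mul_sum, sum_add_distrib, mul_sum]
    _ ≤ c * x⁻¹ ^ 2 * ((k + 1 : ℝ)⁻¹ + x * x⁻¹) := by
        gcongr
        · exact sum_le_hasSum s (fun m _ => div_nonneg (hb m) m.cast_nonneg)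
            (hasSum_choose_mul_pow_mul_pow_div h0 h1 k)
        · exact sum_le_hasSum s (fun m _ => hb m) (hasSum_choose_mul_pow_mul_pow h0 h1 (k + 1))
    _ ≤ c * x⁻¹ ^ 2 * 2 := by
        gcongr
        rw [mul_inv_cancel₀ h0.ne']
        have : (k + 1 : ℝ)⁻¹ ≤ 1 := inv_le_one_of_one_le₀ (by linarith [k.cast_nonneg (α := ℝ)])
        linarith
    _ = 2 * c * x⁻¹ ^ 2 := by ring

section Doubling

variable {φ : ℝ → ℝ} (hφpos : ∀ x : ℝ, 1 ≤ x → 0 < φ x) (hφmono : MonotoneOn φ (Set.Ici 1))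
include hφpos

lemma eventually_apply_two_mul_le
    (hφsv : Tendsto (fun x => φ (2 * x) / φ x) atTop (𝓝 1)) :
    ∀ᶠ t in atTop, φ (2 * t) ≤ 2 * φ t := by
  filter_upwards [hφsv.eventually (eventually_le_nhds one_lt_two), eventually_ge_atTop 1]
    with t ht ht1
  rwa [div_le_iff₀ (hφpos t ht1)] at ht

include hφmono

lemma apply_le_two_mul_mul_div {T : ℝ} (hT : 1 ≤ T)
    (hdouble : ∀ t, T ≤ t → φ (2 * t) ≤ 2 * φ t) {b s : ℝ} (hb : T ≤ b) (hs : b ≤ s) :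
    φ s ≤ 2 * φ b * (s / b) := by
  have hb0 : 0 < b := by linarith
  have hφb : 0 < φ b := hφpos b (by linarith)
  obtain ⟨k, hk⟩ := pow_unbounded_of_one_lt (s / b) one_lt_two
  rw [div_lt_iff₀ hb0] at hk
  induction k generalizing s with
  | zero =>
    obtain rfl : s = b := le_antisymm (by linarith) hs
    rw [div_self hb0.ne']
    linarith
  | succ k ih =>
    have hsb : 1 ≤ s / b := (one_le_div hb0).2 hs
    by_cases hs2 : s ≤ 2 * b
    · calc φ s ≤ φ (2 * b) := hφmono (by simp; linarith) (by simp; linarith) hs2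
        _ ≤ 2 * φ b := hdouble b hb
        _ ≤ 2 * φ b * (s / b) := le_mul_of_one_le_right (by positivity) hsb
    · calc φ s = φ (2 * (s / 2)) := by ring_nf
        _ ≤ 2 * φ (s / 2) := hdouble _ (by linarith)
        _ ≤ 2 * (2 * φ b * (s / 2 / b)) := by
          gcongr
          exact ih (by linarith) (by rw [pow_succ] at hk; linarith)
        _ = 2 * φ b * (s / b) := by ring

lemma exists_apply_le_mul_one_add_mul (hdouble : ∀ᶠ t in atTop, φ (2 * t) ≤ 2 * φ t) :
    ∃ C, 0 ≤ C ∧ ∀ x, 0 < x → x ≤ 1 → ∀ s, 1 ≤ s → φ s ≤ 2 * (φ x⁻¹ + C) * (1 + s * x) := by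
  obtain ⟨T, hT⟩ := eventually_atTop.1 (hdouble.and (eventually_ge_atTop 1))
  have hT1 : 1 ≤ T := (hT T le_rfl).2
  refine ⟨φ T, (hφpos T hT1).le, fun x hx0 hx1 s hs => ?_⟩
  have hxinv : 1 ≤ x⁻¹ := one_le_inv_iff₀.2 ⟨hx0, hx1⟩
  set b := max x⁻¹ T
  have hb1 : 1 ≤ b := le_max_of_le_right hT1
  have hφb : φ b ≤ φ x⁻¹ + φ T := by
    rcases max_cases x⁻¹ T with ⟨h, _⟩ | ⟨h, _⟩ <;> simp only [b, h]
    · linarith [hφpos T hT1]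
    · linarith [hφpos x⁻¹ hxinv]
  have hsx : 0 ≤ s * x := by positivity
  rcases le_total s b with hsb | hbs
  · calc φ s ≤ φ b := hφmono (Set.mem_Ici.2 hs) (Set.mem_Ici.2 hb1) hsb
      _ ≤ φ x⁻¹ + φ T := hφb
      _ ≤ 2 * (φ x⁻¹ + φ T) * (1 + s * x) := by nlinarith [hφpos b hb1]
  · have hsb : s / b ≤ s * x := by
      rw [div_le_iff₀ (by linarith), mul_assoc]
      exact le_mul_of_one_le_right (by linarith) ((inv_le_iff_one_le_mul₀' hx0).1 (le_max_left _ _))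
    calc φ s ≤ 2 * φ b * (s / b) :=
          apply_le_two_mul_mul_div hφpos hφmono hT1 (fun t ht => (hT t ht).1) (le_max_right _ _) hbs
      _ ≤ 2 * (φ x⁻¹ + φ T) * (s * x) :=
          mul_le_mul (by linarith) hsb (by positivity) (by linarith [hφpos b hb1])
      _ ≤ 2 * (φ x⁻¹ + φ T) * (1 + s * x) := by nlinarith [hφpos b hb1]

end Doubling

section CollisionRates

variable (Λ : Measure ℝ)

lemma lamColl_nonneg (m k : ℕ) : 0 ≤ lamColl Λ m k :=
  setIntegral_nonneg measurableSet_Icc fun x hx =>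
    mul_nonneg (pow_nonneg hx.1 _) (pow_nonneg (by linarith [hx.2]) _)

lemma lamTot_nonneg (m : ℕ) : 0 ≤ lamTot Λ m :=
  sum_nonneg fun k _ => mul_nonneg (Nat.cast_nonneg _) (lamColl_nonneg Λ m k)

lemma pColl_nonneg (m k : ℕ) : 0 ≤ pColl Λ m k :=
  div_nonneg (mul_nonneg (Nat.cast_nonneg _) (lamColl_nonneg Λ m _)) (lamTot_nonneg Λ m)

variable [IsFiniteMeasure Λ]

lemma sum_choose_mul_lamColl_mul (k : ℕ) (a : ℕ → ℝ) (s : Finset ℕ) :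
    ∑ m ∈ s, (m.choose k : ℝ) * lamColl Λ m k * a m
      = ∫ x in Set.Icc 0 1, ∑ m ∈ s, (m.choose k : ℝ) * (x ^ (k - 2) * (1 - x) ^ (m - k)) * a m ∂Λ := by
  rw [integral_finsetSum _ fun m _ => (Continuous.integrableOn_Icc (by fun_prop))]
  refine sum_congr rfl fun m _ => ?_
  rw [integral_mul_const, integral_const_mul, lamColl]

lemma measureReal_Icc_le_lamTot {m : ℕ} (hm : 2 ≤ m) : Λ.real (Set.Icc 0 1) ≤ lamTot Λ m := by
  obtain ⟨n, rfl⟩ := Nat.exists_eq_add_of_le' hm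
  calc Λ.real (Set.Icc 0 1) = ∫ _ in Set.Icc (0 : ℝ) 1, (1 : ℝ) ∂Λ := by simp
    _ ≤ ∫ x in Set.Icc 0 1, ∑ k ∈ Icc 2 (n + 2),
          ((n + 2).choose k : ℝ) * (x ^ (k - 2) * (1 - x) ^ (n + 2 - k)) ∂Λ :=
      setIntegral_mono_on (Continuous.integrableOn_Icc continuous_const)
        (Continuous.integrableOn_Icc (by fun_prop)) measurableSet_Icc
        fun x hx => one_le_sum_choose_mul_pow_mul_pow hx.1 hx.2 n
    _ = lamTot Λ (n + 2) := by
      rw [integral_finsetSum _ fun k _ => (Continuous.integrableOn_Icc (by fun_prop))]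
      exact sum_congr rfl fun k _ => integral_const_mul _ _

lemma pColl_le (m k : ℕ) :
    pColl Λ m k ≤ (m.choose (k + 1) : ℝ) * lamColl Λ m (k + 1) / Λ.real (Set.Icc 0 1) := by
  -- The degenerate cases `Λ [0,1] = 0` and `m < 2` hold through the convention `a / 0 = 0`.
  have hnum : 0 ≤ (m.choose (k + 1) : ℝ) * lamColl Λ m (k + 1) :=
    mul_nonneg (Nat.cast_nonneg _) (lamColl_nonneg Λ m _)
  rcases (measureReal_nonneg (μ := Λ) (s := Set.Icc 0 1)).eq_or_lt with hI | hI
  · have hzero : lamColl Λ m (k + 1) = 0 :=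
      setIntegral_measure_zero _ ((measureReal_eq_zero_iff).1 hI.symm)
    simp [pColl, hzero]
  rcases lt_or_ge m 2 with hm | hm
  · have : lamTot Λ m = 0 := sum_eq_zero fun j hj => by
      have := (mem_Icc.1 hj); omega
    rw [pColl, this, div_zero]
    positivity
  exact div_le_div_of_nonneg_left hnum hI (measureReal_Icc_le_lamTot Λ hm)

lemma sum_range_ite_pColl_mul_le (ℓ M : ℕ) {a : ℕ → ℝ} (ha : ∀ m, 0 ≤ a m) :
    ∑ m ∈ range M, (if ℓ < m then pColl Λ m ℓ * a m else 0)
      ≤ (∫ x in Set.Icc 0 1, ∑ m ∈ range M,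
          (m.choose (ℓ + 1) : ℝ) * (x ^ (ℓ + 1 - 2) * (1 - x) ^ (m - (ℓ + 1))) * a m ∂Λ)
        / Λ.real (Set.Icc 0 1) := by
  rw [← sum_choose_mul_lamColl_mul, sum_div]
  gcongr with m
  have hterm : 0 ≤ (m.choose (ℓ + 1) : ℝ) * lamColl Λ m (ℓ + 1) * a m / Λ.real (Set.Icc 0 1) :=
    div_nonneg (mul_nonneg (mul_nonneg (Nat.cast_nonneg _) (lamColl_nonneg Λ m _)) (ha m))
      measureReal_nonneg
  split_ifs
  · rw [mul_div_right_comm]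
    exact mul_le_mul_of_nonneg_right (pColl_le Λ m ℓ) (ha m)
  · exact hterm

end CollisionRates

section Integrability

variable {Λ : Measure ℝ}

lemma integrableOn_inv_sq (hm2 : mm2 Λ < ∞) : IntegrableOn (fun x => x⁻¹ ^ 2) (Set.Icc 0 1) Λ :=
  (lintegral_ofReal_ne_top_iff_integrable (by fun_prop)
    (Eventually.of_forall fun x => sq_nonneg x⁻¹)).1 hm2.ne

lemma integrableOn_inv_sq_mul_apply_inv {φ : ℝ → ℝ} (hφpos : ∀ x : ℝ, 1 ≤ x → 0 < φ x)
    (hφmono : MonotoneOn φ (Set.Ici 1))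
    (hφint : (∫⁻ y in Set.Ioc (0:ℝ) 1, ENNReal.ofReal (y⁻¹ ^ 2 * φ y⁻¹) ∂Λ) < ∞) :
    IntegrableOn (fun x => x⁻¹ ^ 2 * φ x⁻¹) (Set.Ioc 0 1) Λ := by
  have hinv : ∀ x ∈ Set.Ioc (0 : ℝ) 1, x⁻¹ ∈ Set.Ici 1 := fun x hx =>
    one_le_inv_iff₀.2 ⟨hx.1, hx.2⟩
  have hanti : AntitoneOn (fun x => φ x⁻¹) (Set.Ioc 0 1) := fun x hx y hy hxy =>
    hφmono (hinv y hy) (hinv x hx) (inv_anti₀ hx.1 hxy)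
  refine (lintegral_ofReal_ne_top_iff_integrable ?_ ?_).1 hφint.ne
  · exact (Measurable.aestronglyMeasurable (by fun_prop)).mul
      (aemeasurable_restrict_of_antitoneOn measurableSet_Ioc hanti).aestronglyMeasurable
  · filter_upwards [ae_restrict_mem measurableSet_Ioc] with x hx
    exact mul_nonneg (sq_nonneg _) (hφpos _ (hinv x hx)).le

end Integrability

theorem series_p_phi_summable_general
    (Λ : Measure ℝ) [IsFiniteMeasure Λ] (hΛ0 : Λ {0} = 0)
    (hm2 : mm2 Λ < ∞)
    (ℓ : ℕ)
    (φ : ℝ → ℝ)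
    (hφpos : ∀ x : ℝ, 1 ≤ x → 0 < φ x)
    (hφmono : MonotoneOn φ (Set.Ici 1))
    (hφsv : ∀ c : ℝ, 0 < c → Tendsto (fun x => φ (c * x) / φ x) atTop (𝓝 1))
    (hφint : (∫⁻ y in Set.Ioc (0:ℝ) 1, ENNReal.ofReal (y⁻¹ ^ 2 * φ y⁻¹) ∂Λ) < ∞) :
    Summable (fun m : ℕ => if ℓ < m then pColl Λ m ℓ * φ m / m else 0) := by
  obtain ⟨C, hC, hφle⟩ := exists_apply_le_mul_one_add_mul hφpos hφmono
    (eventually_apply_two_mul_le hφpos (hφsv 2 two_pos))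
  have hφdiv (m : ℕ) : 0 ≤ φ m / m := by
    rcases Nat.eq_zero_or_pos m with rfl | hm
    · simp
    · exact div_nonneg (hφpos m (by exact_mod_cast hm)).le m.cast_nonneg
  have hrestrict : Λ.restrict (Set.Icc 0 1) = Λ.restrict (Set.Ioc 0 1) :=
    (Measure.restrict_congr_set (Ioc_ae_eq_Icc' hΛ0)).symm
  have hG : IntegrableOn (fun x => 4 * (x⁻¹ ^ 2 * φ x⁻¹ + C * x⁻¹ ^ 2)) (Set.Ioc 0 1) Λ :=
    ((integrableOn_inv_sq_mul_apply_inv hφpos hφmono hφint).add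
      (((integrableOn_inv_sq hm2).mono_set Set.Ioc_subset_Icc_self).const_mul C)).const_mul 4
  simp_rw [mul_div_assoc]
  refine summable_of_sum_range_le
    (c := (∫ x in Set.Ioc 0 1, 4 * (x⁻¹ ^ 2 * φ x⁻¹ + C * x⁻¹ ^ 2) ∂Λ) / Λ.real (Set.Icc 0 1))
    (fun m => by split_ifs; exacts [mul_nonneg (pColl_nonneg Λ m ℓ) (hφdiv m), le_rfl])
    (fun M => (sum_range_ite_pColl_mul_le Λ ℓ M hφdiv).trans ?_)
  rw [hrestrict]
  refine div_le_div_of_nonneg_right (integral_mono_ae ?_ hG ?_) measureReal_nonneg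
  · exact (Continuous.integrableOn_Icc (by fun_prop)).mono_set Set.Ioc_subset_Icc_self
  filter_upwards [ae_restrict_mem measurableSet_Ioc] with x hx
  have hφx : 0 < φ x⁻¹ := hφpos _ (one_le_inv_iff₀.2 ⟨hx.1, hx.2⟩)
  refine (sum_choose_mul_pow_mul_pow_mul_div_le hx.1 hx.2 (by positivity)
    (fun m hm => hφle x hx.1 hx.2 m (by exact_mod_cast hm)) ℓ (range M)).trans_eq ?_
  ring

/-- **(From the proof of Lemma 2.4)**: assume `m_{-2} < ∞`. Let `ℓ ∈ ℕ` and let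
`φ : [1,∞) → (0,∞)` be nondecreasing, slowly varying at `∞`, with
`∫_{(0,1]} y^{-2} φ(1/y) Λ(dy) < ∞`. Then `Σ_{m=ℓ+1}^∞ p_{m,ℓ} φ(m)/m` converges. -/
theorem series_p_phi_summable
    (Λ : Measure ℝ) [IsFiniteMeasure Λ] (hΛne : Λ ≠ 0)
    (hΛsupp : Λ (Set.Icc (0:ℝ) 1)ᶜ = 0) (hΛ0 : Λ {0} = 0) (hΛ1 : Λ {1} = 0)
    (hm2 : mm2 Λ < ∞)
    (ℓ : ℕ) (hℓ : 1 ≤ ℓ)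
    (φ : ℝ → ℝ)
    (hφpos : ∀ x : ℝ, 1 ≤ x → 0 < φ x)
    (hφmono : MonotoneOn φ (Set.Ici 1))
    (hφsv : ∀ c : ℝ, 0 < c → Tendsto (fun x => φ (c * x) / φ x) atTop (𝓝 1))
    (hφint : (∫⁻ y in Set.Ioc (0:ℝ) 1, ENNReal.ofReal (y⁻¹ ^ 2 * φ y⁻¹) ∂Λ) < ∞) :
    Summable (fun m : ℕ => if ℓ < m then pColl Λ m ℓ * φ m / m else 0) :=
  series_p_phi_summable_general Λ hΛ0 hm2 ℓ φ hφpos hφmono hφsv hφint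
end
end

section
/- Assume m_{-2} := ∫_{[0,1]} x^{-2} Λ(dx) < ∞. Then for every x ∈ [0,1] with Λ({x}) = 0, lim_{n→∞} Σ_{k=1}^{⌊nx⌋} p_{n,k} = m_{-2}^{-1} ∫_{[0,x]} y^{-2} Λ(dy). -/
open MeasureTheory Filter Topology BoundedContinuousFunction
open scoped ENNReal NNReal

noncomputable section

/-!
Writing `y^{k-2} = y^{-2} y^k`, the partial sums `∑_{k=2}^j C(n,k) λ_{n,k}` become integrals
against `y^{-2} Λ(dy)` of the Bernstein sums `∑_{k=2}^j C(n,k) y^k (1-y)^{n-k} ≤ 1`. By Chebyshev's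
inequality for the binomial law, for `y ≠ x` these sums tend to `1_{y ≤ x}` when `j = ⌊nx⌋ + 1`,
and to `1` when `j = n` (as `y > 0` a.e.). Since `y^{-2}` is `Λ`-integrable, dominated convergence
gives the limits of the numerator and of the denominator `λ_n` of `∑_{k=1}^{⌊nx⌋} p_{n,k}`.
-/

namespace LambdaCoalescent

open Finset

def bern (n k : ℕ) (y : ℝ) : ℝ := (bernsteinPolynomial ℝ n k).eval y

lemma bern_eq (n k : ℕ) (y : ℝ) : bern n k y = n.choose k * y ^ k * (1 - y) ^ (n - k) := by
  simp [bern, bernsteinPolynomial]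

variable {n : ℕ} {y : ℝ}

lemma bern_nonneg (k : ℕ) (hy0 : 0 ≤ y) (hy1 : y ≤ 1) : 0 ≤ bern n k y := by
  rw [bern_eq]
  have : 0 ≤ 1 - y := by linarith
  positivity

lemma bern_eq_zero_of_lt {k : ℕ} (h : n < k) : bern n k y = 0 := by
  simp [bern, bernsteinPolynomial.eq_zero_of_lt ℝ h]

lemma sum_range_bern (n : ℕ) (y : ℝ) : ∑ k ∈ range (n + 1), bern n k y = 1 := by
  simpa [bern, Polynomial.eval_finsetSum] using
    congrArg (Polynomial.eval y) (bernsteinPolynomial.sum ℝ n)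

lemma sum_range_sq_mul_bern (n : ℕ) (y : ℝ) :
    ∑ k ∈ range (n + 1), (n * y - k) ^ 2 * bern n k y = n * (y * (1 - y)) := by
  simpa [bern, Polynomial.eval_finsetSum, mul_assoc] using
    congrArg (Polynomial.eval y) (bernsteinPolynomial.variance ℝ n)

lemma sum_mul_bern_le_sum_range {f : ℕ → ℝ} (hf : ∀ k, 0 ≤ f k) (hy0 : 0 ≤ y) (hy1 : y ≤ 1)
    (s : Finset ℕ) : ∑ k ∈ s, f k * bern n k y ≤ ∑ k ∈ range (n + 1), f k * bern n k y := by
  have hs : ∑ k ∈ s ∩ range (n + 1), f k * bern n k y = ∑ k ∈ s, f k * bern n k y :=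
    sum_subset inter_subset_left fun k hks hk => by
      rw [bern_eq_zero_of_lt (by simpa [hks] using hk), mul_zero]
  rw [← hs]
  exact sum_le_sum_of_subset_of_nonneg inter_subset_right fun k _ _ =>
    mul_nonneg (hf k) (bern_nonneg k hy0 hy1)

lemma sum_bern_le_one (hy0 : 0 ≤ y) (hy1 : y ≤ 1) (s : Finset ℕ) : ∑ k ∈ s, bern n k y ≤ 1 := by
  simpa [sum_range_bern] using sum_mul_bern_le_sum_range (fun _ => zero_le_one) hy0 hy1 s

lemma sum_bern_le_of_le_abs_sub {s : Finset ℕ} {c : ℝ} (hy0 : 0 ≤ y) (hy1 : y ≤ 1) (hc : 0 < c)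
    (hs : ∀ k ∈ s, c ≤ |n * y - k|) : ∑ k ∈ s, bern n k y ≤ n * (y * (1 - y)) / c ^ 2 := by
  calc ∑ k ∈ s, bern n k y ≤ ∑ k ∈ s, ((n * y - k) ^ 2 / c ^ 2) * bern n k y := by
        refine sum_le_sum fun k hk => le_mul_of_one_le_left (bern_nonneg k hy0 hy1) ?_
        rw [one_le_div (by positivity), ← sq_abs (n * y - k)]
        exact pow_le_pow_left₀ hc.le (hs k hk) 2
    _ ≤ ∑ k ∈ range (n + 1), ((n * y - k) ^ 2 / c ^ 2) * bern n k y :=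
        sum_mul_bern_le_sum_range (fun _ => by positivity) hy0 hy1 s
    _ = n * (y * (1 - y)) / c ^ 2 := by
        simp_rw [div_mul_eq_mul_div, ← sum_div, sum_range_sq_mul_bern]

lemma tendsto_sum_bern_zero_of_le_abs_sub {s : ℕ → Finset ℕ} {d : ℝ} (hy0 : 0 ≤ y) (hy1 : y ≤ 1)
    (hd : 0 < d) (hs : ∀ᶠ n : ℕ in atTop, ∀ k ∈ s n, n * d ≤ |n * y - k|) :
    Tendsto (fun n => ∑ k ∈ s n, bern n k y) atTop (𝓝 0) := by
  have hbound : Tendsto (fun n : ℕ => y * (1 - y) / d ^ 2 * (n : ℝ)⁻¹) atTop (𝓝 0) := by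
    simpa using (tendsto_inv_atTop_nhds_zero_nat (𝕜 := ℝ)).const_mul (y * (1 - y) / d ^ 2)
  refine tendsto_of_tendsto_of_tendsto_of_le_of_le' tendsto_const_nhds hbound
    (Eventually.of_forall fun n => sum_nonneg fun k _ => bern_nonneg k hy0 hy1) ?_
  filter_upwards [hs, eventually_gt_atTop 0] with n hn hn0
  have hn0' : (0 : ℝ) < n := by exact_mod_cast hn0
  refine (sum_bern_le_of_le_abs_sub hy0 hy1 (by positivity) hn).trans_eq ?_
  field_simp

lemma tendsto_sum_Icc_two_bern (hy0 : 0 < y) (hy1 : y ≤ 1) :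
    Tendsto (fun n => ∑ k ∈ Icc 2 n, bern n k y) atTop (𝓝 1) := by
  -- the terms `k = 0, 1` carry vanishing mass since `n y → ∞`
  have hlow : Tendsto (fun n => ∑ k ∈ range 2, bern n k y) atTop (𝓝 0) := by
    refine tendsto_sum_bern_zero_of_le_abs_sub hy0.le hy1 (half_pos hy0) ?_
    have := (tendsto_natCast_atTop_atTop (R := ℝ)).atTop_mul_const (half_pos hy0)
    filter_upwards [this.eventually_ge_atTop 1] with n hn k hk
    have hk : (k : ℝ) ≤ 1 := by exact_mod_cast Nat.lt_succ_iff.mp (mem_range.mp hk)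
    rw [abs_of_nonneg (by linarith)]
    linarith
  have := (tendsto_const_nhds (x := (1 : ℝ))).sub hlow
  rw [sub_zero] at this
  refine this.congr' ?_
  filter_upwards [eventually_ge_atTop 1] with n hn
  rw [← sum_range_bern n y, ← sum_range_add_sum_Ico _ (by omega : 2 ≤ n + 1),
    Ico_add_one_right_eq_Icc, add_sub_cancel_left]

lemma tendsto_sum_Icc_floor_bern {x : ℝ} (hx : 0 ≤ x) (hy0 : 0 < y) (hy1 : y ≤ 1) (hxy : y ≠ x) :
    Tendsto (fun n : ℕ => ∑ k ∈ Icc 2 (⌊n * x⌋₊ + 1), bern n k y) atTop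
      (𝓝 (Set.indicator (Set.Iic x) 1 y)) := by
  rcases hxy.lt_or_gt with hlt | hgt
  · rw [Set.indicator_of_mem (Set.mem_Iic.mpr hlt.le), Pi.one_apply]
    have htail : Tendsto (fun n : ℕ => ∑ k ∈ Ioc (⌊n * x⌋₊ + 1) n, bern n k y) atTop (𝓝 0) := by
      refine tendsto_sum_bern_zero_of_le_abs_sub hy0.le hy1 (sub_pos.mpr hlt)
        (Eventually.of_forall fun n k hk => ?_)
      have hk : (⌊n * x⌋₊ : ℝ) + 1 < k := by exact_mod_cast (mem_Ioc.mp hk).1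
      have := Nat.lt_floor_add_one ((n : ℝ) * x)
      rw [abs_sub_comm, abs_of_nonneg (by nlinarith)]
      linarith
    have hlower := (tendsto_sum_Icc_two_bern hy0 hy1).sub htail
    rw [sub_zero] at hlower
    refine tendsto_of_tendsto_of_tendsto_of_le_of_le hlower tendsto_const_nhds (fun n => ?_)
      (fun n => sum_bern_le_one hy0.le hy1 _)
    have hdisj : Disjoint (Icc 2 (⌊n * x⌋₊ + 1)) (Ioc (⌊n * x⌋₊ + 1) n) :=
      disjoint_left.mpr fun k hk hk' => by simp only [mem_Icc, mem_Ioc] at hk hk'; omega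
    have hsub : Icc 2 n ⊆ Icc 2 (⌊n * x⌋₊ + 1) ∪ Ioc (⌊n * x⌋₊ + 1) n := fun k hk => by
      simp only [mem_Icc, mem_union, mem_Ioc] at hk ⊢; omega
    rw [sub_le_iff_le_add, ← sum_union hdisj]
    exact sum_le_sum_of_subset_of_nonneg hsub fun k _ _ => bern_nonneg k hy0.le hy1
  · rw [Set.indicator_of_notMem (Set.notMem_Iic.mpr hgt)]
    refine tendsto_sum_bern_zero_of_le_abs_sub hy0.le hy1 (half_pos (sub_pos.mpr hgt)) ?_
    have := (tendsto_natCast_atTop_atTop (R := ℝ)).atTop_mul_const (half_pos (sub_pos.mpr hgt))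
    filter_upwards [this.eventually_ge_atTop 1] with n hn k hk
    have hk : (k : ℝ) ≤ ⌊n * x⌋₊ + 1 := by exact_mod_cast (mem_Icc.mp hk).2
    have := Nat.floor_le (mul_nonneg n.cast_nonneg hx)
    rw [abs_of_nonneg (by nlinarith)]
    linarith

def lamIntegrand (n j : ℕ) (y : ℝ) : ℝ :=
  ∑ k ∈ Icc 2 j, (n.choose k : ℝ) * (y ^ (k - 2) * (1 - y) ^ (n - k))

lemma sq_mul_lamIntegrand (n j : ℕ) (y : ℝ) :
    y ^ 2 * lamIntegrand n j y = ∑ k ∈ Icc 2 j, bern n k y := by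
  rw [lamIntegrand, mul_sum]
  refine sum_congr rfl fun k hk => ?_
  obtain ⟨i, rfl⟩ := Nat.exists_eq_add_of_le (mem_Icc.mp hk).1
  rw [bern_eq, Nat.add_sub_cancel_left, pow_add]
  ring

lemma lamIntegrand_eq_inv_sq_mul {j : ℕ} (hy : y ≠ 0) :
    lamIntegrand n j y = y⁻¹ ^ 2 * ∑ k ∈ Icc 2 j, bern n k y := by
  rw [← sq_mul_lamIntegrand]
  field_simp

lemma lamIntegrand_nonneg (j : ℕ) (hy0 : 0 ≤ y) (hy1 : y ≤ 1) : 0 ≤ lamIntegrand n j y :=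
  sum_nonneg fun k _ => by
    have : 0 ≤ 1 - y := by linarith
    positivity

lemma lamIntegrand_le_inv_sq (j : ℕ) (hy0 : 0 < y) (hy1 : y ≤ 1) :
    lamIntegrand n j y ≤ y⁻¹ ^ 2 := by
  rw [lamIntegrand_eq_inv_sq_mul hy0.ne']
  exact mul_le_of_le_one_right (by positivity) (sum_bern_le_one hy0.le hy1 _)

lemma continuous_lamIntegrand (n j : ℕ) : Continuous (lamIntegrand n j) := by
  unfold lamIntegrand
  fun_prop

lemma tendsto_lamIntegrand_self (hy0 : 0 < y) (hy1 : y ≤ 1) :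
    Tendsto (fun n => lamIntegrand n n y) atTop (𝓝 (y⁻¹ ^ 2)) := by
  simp_rw [lamIntegrand_eq_inv_sq_mul hy0.ne']
  simpa only [mul_one] using (tendsto_sum_Icc_two_bern hy0 hy1).const_mul (y⁻¹ ^ 2)

lemma tendsto_lamIntegrand_floor {x : ℝ} (hx : 0 ≤ x) (hy0 : 0 < y) (hy1 : y ≤ 1) (hxy : y ≠ x) :
    Tendsto (fun n : ℕ => lamIntegrand n (⌊n * x⌋₊ + 1) y) atTop
      (𝓝 (Set.indicator (Set.Iic x) (fun z => z⁻¹ ^ 2) y)) := by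
  have hlim : Set.indicator (Set.Iic x) (fun z => z⁻¹ ^ 2) y =
      y⁻¹ ^ 2 * Set.indicator (Set.Iic x) 1 y := by
    simp [Set.indicator_apply]
  simp_rw [lamIntegrand_eq_inv_sq_mul hy0.ne', hlim]
  exact (tendsto_sum_Icc_floor_bern hx hy0 hy1 hxy).const_mul (y⁻¹ ^ 2)

variable {Λ : Measure ℝ}

lemma setIntegral_lamIntegrand [IsFiniteMeasureOnCompacts Λ] (n j : ℕ) :
    ∫ y in Set.Icc (0 : ℝ) 1, lamIntegrand n j y ∂Λ =
      ∑ k ∈ Icc 2 j, (n.choose k : ℝ) * lamColl Λ n k := by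
  unfold lamIntegrand
  rw [integral_finsetSum _ fun k _ => (by fun_prop : Continuous _).integrableOn_Icc]
  simp_rw [integral_const_mul]
  rfl

lemma lamTot_eq_setIntegral [IsFiniteMeasureOnCompacts Λ] (n : ℕ) :
    lamTot Λ n = ∫ y in Set.Icc (0 : ℝ) 1, lamIntegrand n n y ∂Λ :=
  (setIntegral_lamIntegrand n n).symm

lemma sum_pColl_eq_div [IsFiniteMeasureOnCompacts Λ] (n j : ℕ) :
    ∑ k ∈ Icc 1 j, pColl Λ n k =
      (∫ y in Set.Icc (0 : ℝ) 1, lamIntegrand n (j + 1) y ∂Λ) / lamTot Λ n := by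
  simp only [pColl, ← sum_div]
  rw [setIntegral_lamIntegrand, ← map_add_right_Icc 1 j 1, sum_map]
  rfl

lemma ae_restrict_Icc_mem_Ioc (hΛ0 : Λ {0} = 0) :
    ∀ᵐ y ∂Λ.restrict (Set.Icc 0 1), y ∈ Set.Ioc (0 : ℝ) 1 := by
  filter_upwards [ae_restrict_mem measurableSet_Icc,
    ae_restrict_of_ae (measure_eq_zero_iff_ae_notMem.1 hΛ0)] with y hy hy0
  exact ⟨lt_of_le_of_ne hy.1 (Ne.symm hy0), hy.2⟩

lemma integrableOn_inv_sq (hm2 : mm2 Λ < ∞) :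
    IntegrableOn (fun y : ℝ => y⁻¹ ^ 2) (Set.Icc 0 1) Λ :=
  ⟨(measurable_inv.pow_const 2).aestronglyMeasurable,
    (hasFiniteIntegral_iff_ofReal (Eventually.of_forall fun y => by positivity)).2 hm2⟩

lemma tendsto_setIntegral_lamIntegrand (hΛ0 : Λ {0} = 0) (hm2 : mm2 Λ < ∞) {j : ℕ → ℕ}
    {f : ℝ → ℝ} (hf : ∀ᵐ y ∂Λ.restrict (Set.Icc 0 1),
      Tendsto (fun n => lamIntegrand n (j n) y) atTop (𝓝 (f y))) :
    Tendsto (fun n => ∫ y in Set.Icc 0 1, lamIntegrand n (j n) y ∂Λ) atTop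
      (𝓝 (∫ y in Set.Icc 0 1, f y ∂Λ)) :=
  tendsto_integral_of_dominated_convergence (fun y => y⁻¹ ^ 2)
    (fun n => (continuous_lamIntegrand n (j n)).aestronglyMeasurable) (integrableOn_inv_sq hm2)
    (fun _ => (ae_restrict_Icc_mem_Ioc hΛ0).mono fun y hy => by
      rw [Real.norm_of_nonneg (lamIntegrand_nonneg _ hy.1.le hy.2)]
      exact lamIntegrand_le_inv_sq _ hy.1 hy.2) hf

lemma mm2_ne_zero (hΛ : Λ ≠ 0) (hsupp : Λ (Set.Icc 0 1)ᶜ = 0) (hΛ0 : Λ {0} = 0) :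
    mm2 Λ ≠ 0 := by
  intro h
  rw [mm2, lintegral_eq_zero_iff (measurable_inv.pow_const 2).ennreal_ofReal] at h
  have hfalse : ∀ᵐ y ∂Λ.restrict (Set.Icc 0 1), False := by
    filter_upwards [h, ae_restrict_Icc_mem_Ioc hΛ0] with y hy hy'
    have : 0 < y⁻¹ ^ 2 := by have := hy'.1; positivity
    rw [Pi.zero_apply, ENNReal.ofReal_eq_zero] at hy
    linarith
  have hres : Λ.restrict (Set.Icc 0 1) = 0 := ae_eq_bot.1 (eventually_false_iff_eq_bot.1 hfalse)
  exact hΛ (Measure.restrict_eq_self_of_ae_mem (mem_ae_iff.2 hsupp) ▸ hres)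

end LambdaCoalescent

open LambdaCoalescent in
theorem sum_pColl_tendsto_general
    (Λ : Measure ℝ) [IsFiniteMeasure Λ] (hΛne : Λ ≠ 0)
    (hΛsupp : Λ (Set.Icc (0:ℝ) 1)ᶜ = 0) (hΛ0 : Λ {0} = 0)
    (hm2 : mm2 Λ < ∞) :
    ∀ x : ℝ, x ∈ Set.Icc (0:ℝ) 1 → Λ {x} = 0 →
      Tendsto (fun n : ℕ => ∑ k ∈ Finset.Icc 1 (Nat.floor ((n : ℝ) * x)), pColl Λ n k)
        atTop
        (𝓝 (((∫⁻ y in Set.Icc (0:ℝ) x, ENNReal.ofReal (y⁻¹ ^ 2) ∂Λ) / mm2 Λ).toReal)) := by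
  rintro x ⟨hx0, hx1⟩ hΛx
  have hae : ∀ᵐ y ∂Λ.restrict (Set.Icc 0 1), y ∈ Set.Ioc 0 1 ∧ y ≠ x :=
    (ae_restrict_Icc_mem_Ioc hΛ0).and
      (ae_restrict_of_ae (measure_eq_zero_iff_ae_notMem.1 hΛx))
  have hnum := tendsto_setIntegral_lamIntegrand hΛ0 hm2
    (hae.mono fun y hy => tendsto_lamIntegrand_floor hx0 hy.1.1 hy.1.2 hy.2)
  have hden := tendsto_setIntegral_lamIntegrand hΛ0 hm2 (j := id)
    (hae.mono fun y hy => tendsto_lamIntegrand_self hy.1.1 hy.1.2)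
  have hIcc : Set.Iic x ∩ Set.Icc 0 1 = Set.Icc 0 x := by
    ext y
    simp only [Set.mem_inter_iff, Set.mem_Iic, Set.mem_Icc]
    exact ⟨fun h => ⟨h.2.1, h.1⟩, fun h => ⟨h.2, h.1, h.2.trans hx1⟩⟩
  have htoReal (s : Set ℝ) :
      ∫ y in s, y⁻¹ ^ 2 ∂Λ = (∫⁻ y in s, ENNReal.ofReal (y⁻¹ ^ 2) ∂Λ).toReal :=
    integral_eq_lintegral_of_nonneg_ae (Eventually.of_forall fun y => by positivity)
      (measurable_inv.pow_const 2).aestronglyMeasurable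
  rw [integral_indicator measurableSet_Iic, Measure.restrict_restrict measurableSet_Iic, hIcc,
    htoReal] at hnum
  rw [htoReal] at hden
  simp_rw [ENNReal.toReal_div, sum_pColl_eq_div, lamTot_eq_setIntegral]
  exact hnum.div hden (ENNReal.toReal_ne_zero.2 ⟨mm2_ne_zero hΛne hΛsupp hΛ0, hm2.ne⟩)

/-- **Formula (2.4)**: assume `m_{-2} < ∞`. Then for every `x ∈ [0,1]` with `Λ({x}) = 0`,
`lim_{n→∞} Σ_{k=1}^{⌊nx⌋} p_{n,k} = m_{-2}^{-1} ∫_{[0,x]} y^{-2} Λ(dy)`. -/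
theorem sum_pColl_tendsto
    (Λ : Measure ℝ) [IsFiniteMeasure Λ] (hΛne : Λ ≠ 0)
    (hΛsupp : Λ (Set.Icc (0:ℝ) 1)ᶜ = 0) (hΛ0 : Λ {0} = 0) (hΛ1 : Λ {1} = 0)
    (hm2 : mm2 Λ < ∞) :
    ∀ x : ℝ, x ∈ Set.Icc (0:ℝ) 1 → Λ {x} = 0 →
      Tendsto (fun n : ℕ => ∑ k ∈ Finset.Icc 1 (Nat.floor ((n : ℝ) * x)), pColl Λ n k)
        atTop
        (𝓝 (((∫⁻ y in Set.Icc (0:ℝ) x, ENNReal.ofReal (y⁻¹ ^ 2) ∂Λ) / mm2 Λ).toReal)) :=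
  sum_pColl_tendsto_general Λ hΛne hΛsupp hΛ0 hm2
end
end

section
/- Let c₀ > 0 and let n ≥ 2 be an integer with 1 + c₀ log n ≤ n. Then sup_{s∈[0,1]} | s·log n − log⁺(n^s − c₀ log n) | = log(1 + c₀ log n), where log⁺ t := log t if t ≥ 1 and log⁺ t := 0 if t < 1. -/
open Filter Topology

noncomputable section

/-- The positive part of the logarithm: `log⁺ t = log t` for `t ≥ 1`, `log⁺ t = 0` otherwise. -/
def logPlus (t : ℝ) : ℝ := if 1 ≤ t then Real.log t else 0

/-- **Formula (3.7)**: for `c₀ > 0` and an integer `n ≥ 2` with `1 + c₀ log n ≤ n`,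
`sup_{s∈[0,1]} |s·log n − log⁺(n^s − c₀ log n)| = log(1 + c₀ log n)`,
and the supremum is attained. -/
theorem sup_log_difference_eq
    (c₀ : ℝ) (hc₀ : 0 < c₀) (n : ℕ) (hn : 2 ≤ n)
    (hcn : 1 + c₀ * Real.log n ≤ n) :
    IsGreatest
      ((fun s : ℝ => |s * Real.log n - logPlus ((n : ℝ) ^ s - c₀ * Real.log n)|) ''
        Set.Icc (0:ℝ) 1)
      (Real.log (1 + c₀ * Real.log n)) := by
  have hn1 : (1 : ℝ) < n := by exact_mod_cast Nat.one_lt_two.trans_le hn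
  have hnpos : (0 : ℝ) < n := lt_trans one_pos hn1
  have hL : 0 < Real.log n := Real.log_pos hn1
  set L := Real.log n with hLdef
  set c := c₀ * L with hcdef
  have hc : 0 < c := mul_pos hc₀ hL
  have h1c : (1 : ℝ) ≤ 1 + c := by linarith
  have h1cpos : (0 : ℝ) < 1 + c := by linarith
  have hlog1c : 0 ≤ Real.log (1 + c) := Real.log_nonneg h1c
  have hlogle : Real.log (1 + c) ≤ L := by
    rw [hLdef]; exact Real.log_le_log h1cpos hcn
  constructor
  · -- membership: attained at s₀ = log(1+c)/L
    refine ⟨Real.log (1 + c) / L, ⟨div_nonneg hlog1c hL.le, ?_⟩, ?_⟩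
    · rw [div_le_one hL]; exact hlogle
    · have hpow : (n : ℝ) ^ (Real.log (1 + c) / L) = 1 + c := by
        rw [Real.rpow_def_of_pos hnpos, ← hLdef, mul_div_cancel₀ _ hL.ne',
          Real.exp_log h1cpos]
      simp only [hpow]
      have : (1 : ℝ) + c - c = 1 := by ring
      rw [this]
      have : logPlus 1 = 0 := by simp [logPlus]
      rw [this, div_mul_cancel₀ _ hL.ne', sub_zero, abs_of_nonneg hlog1c]
  · -- upper bound
    rintro y ⟨s, ⟨hs0, hs1⟩, rfl⟩
    have hxdef : (n : ℝ) ^ s = Real.exp (L * s) := Real.rpow_def_of_pos hnpos s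
    set x := (n : ℝ) ^ s with hxeq
    have hx1 : 1 ≤ x := by
      rw [hxdef, ← Real.exp_zero]
      exact Real.exp_le_exp.mpr (by positivity)
    have hxpos : 0 < x := lt_of_lt_of_le one_pos hx1
    have hlogx : Real.log x = s * L := by
      rw [hxdef, Real.log_exp]; ring
    have hxn : x ≤ (n : ℝ) := by
      rw [hxdef]
      calc Real.exp (L * s) ≤ Real.exp (L * 1) :=
            Real.exp_le_exp.mpr (by nlinarith)
        _ = (n : ℝ) := by rw [mul_one, hLdef, Real.exp_log hnpos]
    simp only [← hcdef, ← hLdef]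
    by_cases hxc : 1 ≤ x - c
    · rw [logPlus, if_pos hxc]
      have hxcpos : 0 < x - c := lt_of_lt_of_le one_pos hxc
      have hlb : 0 ≤ s * L - Real.log (x - c) := by
        rw [← hlogx]
        have := Real.log_le_log hxcpos (by linarith : x - c ≤ x)
        linarith
      rw [abs_of_nonneg hlb]
      have hub : Real.log x ≤ Real.log ((1 + c) * (x - c)) := by
        apply Real.log_le_log hxpos
        nlinarith
      rw [Real.log_mul (by positivity) (by positivity)] at hub
      rw [← hlogx]; linarith
    · rw [logPlus, if_neg hxc, sub_zero]
      have hsl : 0 ≤ s * L := mul_nonneg hs0 hL.le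
      rw [abs_of_nonneg hsl, ← hlogx]
      exact Real.log_le_log hxpos (by linarith)
end
end
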